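/- Let d ∈ ℕ, T ∈ ℝ and α ∈ ℝ^d, and define u_{T,α}(t,x) := √2 / (A₀(α)(T−t) − A_j(α) x^j). Then at every (t,x) ∈ ℝ^{1+d} with A₀(α)(T−t) − A_j(α) x^j ≠ 0, the function u_{T,α} satisfies the focusing cubic wave equation −∂_t² u(t,x) + Δ_x u(t,x) + u(t,x)³ = 0. -/

import Mathlib

noncomputable section

/-- `A₀(α) = cosh(α^d)···cosh(α¹)` -/
def A0 {d : ℕ} (α : Fin d → ℝ) : ℝ := ∏ k, Real.cosh (α k)

/-- `A_j(α) = cosh(α^d)···cosh(α^{j+1}) sinh(α^j)` -/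
def Ac {d : ℕ} (α : Fin d → ℝ) (j : Fin d) : ℝ :=
  (∏ k ∈ Finset.Ioi j, Real.cosh (α k)) * Real.sinh (α j)

/-- the partial derivative in the `i`-th coordinate direction -/
def pdR {d : ℕ} (i : Fin d) (f : EuclideanSpace ℝ (Fin d) → ℝ) :
    EuclideanSpace ℝ (Fin d) → ℝ :=
  fun x => fderiv ℝ f x (EuclideanSpace.single i 1)

/-- the ODE-blowup solution transported by a Lorentz boost:
`u_{T,α}(t,x) = √2 / (A₀(α)(T−t) − A_j(α)x^j)` -/
def uTA {d : ℕ} (T : ℝ) (α : Fin d → ℝ) (t : ℝ) (x : EuclideanSpace ℝ (Fin d)) : ℝ :=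
  Real.sqrt 2 / (A0 α * (T - t) - ∑ j, Ac α j * x j)

/-!
Write `u = √2 / ℓ` with `ℓ(t, x) = A₀(T − t) − A_j x^j` affine. The second derivative of
`c / ℓ` along a direction `v` is `2c (Dℓ v)² / ℓ³`, so `−∂_t² u + Δ_x u = −2√2 (A₀² − Σ_j A_j²) / ℓ³`,
and the hyperbolic identity `A₀² − Σ_j A_j² = 1` makes this `−u³`.
-/

theorem A0_sq_sub_sum_Ac_sq {d : ℕ} (α : Fin d → ℝ) : A0 α ^ 2 - ∑ j, Ac α j ^ 2 = 1 := by
  induction d with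
  | zero => simp [A0]
  | succ n ih =>
    have hA0 : A0 α = Real.cosh (α 0) * A0 (α ∘ Fin.succ) := by
      rw [A0, A0, Fin.prod_univ_succ]; rfl
    have hAc_zero : Ac α 0 = A0 (α ∘ Fin.succ) * Real.sinh (α 0) := by
      rw [Ac, A0, Fin.prod_Ioi_zero]; rfl
    have hAc_succ (i : Fin n) : Ac α i.succ = Ac (α ∘ Fin.succ) i := by
      rw [Ac, Ac, Fin.prod_Ioi_succ]; rfl
    rw [Fin.sum_univ_succ, hA0, hAc_zero]
    simp only [hAc_succ]
    linear_combination A0 (α ∘ Fin.succ) ^ 2 * Real.cosh_sq_sub_sinh_sq (α 0) + ih (α ∘ Fin.succ)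

section AffineZpow

variable {E : Type*} [NormedAddCommGroup E] [NormedSpace ℝ E] (c C : ℝ) (L : E →L[ℝ] ℝ)

theorem hasFDerivAt_const_mul_affine_zpow (n : ℤ) {x : E} (hx : C + L x ≠ 0) :
    HasFDerivAt (fun y => c * (C + L y) ^ n) ((c * (n * (C + L x) ^ (n - 1))) • L) x := by
  have hℓ : HasFDerivAt (fun y => C + L y) L x :=
    ((hasFDerivAt_const C x).add L.hasFDerivAt).congr_fderiv (zero_add L)
  simpa [smul_smul, Function.comp_def] using
    ((hasDerivAt_zpow n _ (Or.inl hx)).comp_hasFDerivAt x hℓ).const_mul c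

theorem fderiv_fderiv_const_mul_affine_zpow (n : ℤ) {x : E} (hx : C + L x ≠ 0) (v : E) :
    fderiv ℝ (fun y => fderiv ℝ (fun z => c * (C + L z) ^ n) y v) x v
      = c * n * (n - 1) * (C + L x) ^ (n - 2) * L v ^ 2 := by
  have hnear : ∀ᶠ y in nhds x, C + L y ≠ 0 :=
    (continuous_const.add L.continuous).continuousAt.eventually_ne hx
  have hfirst : (fun y => fderiv ℝ (fun z => c * (C + L z) ^ n) y v) =ᶠ[nhds x]
      fun y => c * n * L v * (C + L y) ^ (n - 1) :=
    hnear.mono fun y hy => by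
      dsimp only
      rw [(hasFDerivAt_const_mul_affine_zpow c C L n hy).fderiv]
      simp only [FunLike.coe_smul, Pi.smul_apply, smul_eq_mul]
      ring
  rw [hfirst.fderiv_eq, (hasFDerivAt_const_mul_affine_zpow (c * n * L v) C L (n - 1) hx).fderiv]
  simp only [FunLike.coe_smul, Pi.smul_apply, smul_eq_mul, sub_sub, show (1 + 1 : ℤ) = 2 by norm_num]
  push_cast
  ring

theorem fderiv_fderiv_const_div_affine {x : E} (hx : C + L x ≠ 0) (v : E) :
    fderiv ℝ (fun y => fderiv ℝ (fun z => c / (C + L z)) y v) x v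
      = 2 * c * L v ^ 2 / (C + L x) ^ 3 := by
  have hdiv : (fun z => c / (C + L z)) = fun z => c * (C + L z) ^ (-1 : ℤ) := by
    simp only [zpow_neg_one, div_eq_mul_inv]
  rw [hdiv, fderiv_fderiv_const_mul_affine_zpow c C L (-1) hx v]
  norm_num
  field_simp

end AffineZpow

theorem deriv_deriv_const_div_affine (c C b t : ℝ) (ht : C + b * t ≠ 0) :
    deriv (deriv fun s => c / (C + b * s)) t = 2 * c * b ^ 2 / (C + b * t) ^ 3 := by
  simpa using fderiv_fderiv_const_div_affine c C (b • ContinuousLinearMap.id ℝ ℝ)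
    (by simpa using ht) 1

theorem pdR_pdR_const_div_affine {d : ℕ} (c C : ℝ) (a : Fin d → ℝ) (j : Fin d)
    {x : EuclideanSpace ℝ (Fin d)} (hx : C - ∑ k, a k * x k ≠ 0) :
    pdR j (pdR j fun y => c / (C - ∑ k, a k * y k)) x
      = 2 * c * a j ^ 2 / (C - ∑ k, a k * x k) ^ 3 := by
  unfold pdR
  set L : EuclideanSpace ℝ (Fin d) →L[ℝ] ℝ := -∑ k, a k • EuclideanSpace.proj k
  have hL (y : EuclideanSpace ℝ (Fin d)) : L y = -∑ k, a k * y k := by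
    simp [L]
  have := fderiv_fderiv_const_div_affine c C L (x := x) (by rwa [hL, ← sub_eq_add_neg])
    (EuclideanSpace.single j 1)
  simpa [hL, ← sub_eq_add_neg] using this

/-- `u_{T,α}` solves the focusing cubic wave equation `−∂_t²u + Δ_x u + u³ = 0` wherever its
denominator is nonzero. -/
theorem stmt_14 (d : ℕ) (T : ℝ) (α : Fin d → ℝ) (t : ℝ) (x : EuclideanSpace ℝ (Fin d))
    (h : A0 α * (T - t) - ∑ j, Ac α j * x j ≠ 0) :
    -(deriv (deriv fun s => uTA T α s x) t) +
        (∑ j, pdR j (pdR j fun y => uTA T α t y) x) + (uTA T α t x) ^ 3 = 0 := by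
  have hT : (fun s => uTA T α s x)
      = fun s => √2 / ((A0 α * T - ∑ j, Ac α j * x j) + -A0 α * s) := by
    funext s; rw [uTA]; ring_nf
  have htime : deriv (deriv fun s => uTA T α s x) t
      = 2 * √2 * A0 α ^ 2 / (A0 α * (T - t) - ∑ j, Ac α j * x j) ^ 3 := by
    rw [hT, deriv_deriv_const_div_affine _ _ _ _ (by convert h using 1; ring)]
    ring_nf
  have hspace (j : Fin d) : pdR j (pdR j fun y => uTA T α t y) x
      = 2 * √2 * Ac α j ^ 2 / (A0 α * (T - t) - ∑ j, Ac α j * x j) ^ 3 :=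
    pdR_pdR_const_div_affine _ _ _ j h
  have hsum : ∑ j, Ac α j ^ 2 = A0 α ^ 2 - 1 := by linarith [A0_sq_sub_sum_Ac_sq α]
  have hsqrt : √2 ^ 3 = 2 * √2 := by rw [pow_succ, Real.sq_sqrt zero_le_two]
  rw [htime, Finset.sum_congr rfl fun j _ => hspace j, ← Finset.sum_div, ← Finset.mul_sum, hsum,
    uTA, div_pow, hsqrt]
  ring

end
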